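/- arXiv:1201.0879 — 7 statements merged into one kernel-verified Lean document; each statement's English description precedes it below -/
import Mathlib

section
/- Over F_2, every common zero (x1,...,x8) of the three quadratic forms Q1 = x1*x2 + x3^2 + x3*x4 + x4^2, Q2 = x5*x6 + x7^2 + x7*x8 + x8^2, Q3 = x1^2 + x1*x2 + x2^2 + x5*x7 + x6*x8 + x7^2 + x8^2 is a singular zero of Q1, i.e. the gradient of Q1 vanishes at every common zero. -/
/-- Over `𝔽₂`, every common zero of `Q1, Q2, Q3` is a singular zero of
`Q1`, i.e. the gradient `(x₂, x₁, x₄, x₃)` of `Q1` vanishes there. -/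
theorem stmt2 (x : Fin 8 → ZMod 2)
    (h1 : x 0 * x 1 + x 2 ^ 2 + x 2 * x 3 + x 3 ^ 2 = 0)
    (h2 : x 4 * x 5 + x 6 ^ 2 + x 6 * x 7 + x 7 ^ 2 = 0)
    (h3 : x 0 ^ 2 + x 0 * x 1 + x 1 ^ 2 + x 4 * x 6 + x 5 * x 7 + x 6 ^ 2 + x 7 ^ 2 = 0) :
    x 1 = 0 ∧ x 0 = 0 ∧ x 3 = 0 ∧ x 2 = 0 := by
  revert h1 h2 h3
  generalize x 0 = a; generalize x 1 = b; generalize x 2 = c; generalize x 3 = d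
  generalize x 4 = e; generalize x 5 = f; generalize x 6 = g; generalize x 7 = h
  revert a b c d e f g h
  decide
end

section
/- Over F_2, the quadratic forms Q1 + Q3 = x1^2 + x2^2 + x3^2 + x3*x4 + x4^2 + x5*x7 + x6*x8 + x7^2 + x8^2 and Q2 + Q3 = x1^2 + x1*x2 + x2^2 + (x5 + x8)*(x6 + x7) do not simultaneously vanish on any 4-dimensional linear subspace L of F_2^8. -/
/-!
Write `N(a, b) = a² + ab + b²` for the norm form of `𝔽₄ / 𝔽₂`. The form `Q2 + Q3` is
`N(x1, x2) + y z` in the coordinates `π x = (x1, x2, y, z) = (x1, x2, x5 + x8, x6 + x7)`, an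
elliptic form on `𝔽₂⁴`, whose totally singular subspaces are at most lines; so `L ∩ ker π` has
codimension at most one in `L`. On `ker π` the form `Q1 + Q3` becomes `N(x3, x4) + (x5 + x7)²`,
which again has no singular line in `𝔽₂³`, and the remaining kernel is the line spanned by
`(0, 0, 0, 0, 1, 1, 1, 1)`. Hence a common totally singular subspace has dimension at most three.
-/

open Module

theorem Submodule.finrank_eq_finrank_map_add_finrank_inf_ker {K E V : Type*} [DivisionRing K]
    [AddCommGroup E] [Module K E] [AddCommGroup V] [Module K V] [FiniteDimensional K E]
    (f : E →ₗ[K] V) (L : Submodule K E) :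
    finrank K L = finrank K (L.map f) + finrank K ↥(L ⊓ LinearMap.ker f) := by
  rw [← (f.domRestrict L).finrank_range_add_finrank_ker, LinearMap.range_domRestrict,
    LinearMap.ker_domRestrict, ← Submodule.finrank_map_subtype_eq, Submodule.map_comap_subtype]

section NoSingularLine

variable {V : Type*} [AddCommGroup V] [Module (ZMod 2) V] (q : V → ZMod 2)

/-- Over `𝔽₂` the lines are the subspaces `{0, u, v, u + v}`. -/
def NoSingularLine : Prop :=
  ∀ u v, q u = 0 → q v = 0 → q (u + v) = 0 → u = 0 ∨ v = 0 ∨ u = v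

variable {q}

theorem NoSingularLine.finrank_le_one (hq : NoSingularLine q)
    {S : Submodule (ZMod 2) V} (hS : ∀ v ∈ S, q v = 0) : finrank (ZMod 2) S ≤ 1 := by
  rcases eq_or_ne S ⊥ with rfl | hS0
  · simp
  obtain ⟨u, hu, hu0⟩ := S.ne_bot_iff.mp hS0
  refine _root_.finrank_le_one ⟨u, hu⟩ fun ⟨w, hw⟩ => ?_
  rcases hq u w (hS u hu) (hS w hw) (hS _ (S.add_mem hu hw)) with h | rfl | rfl
  · exact absurd h hu0
  · exact ⟨0, Subtype.ext (zero_smul _ u)⟩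
  · exact ⟨1, one_smul _ _⟩

theorem NoSingularLine.finrank_le_one_add_finrank_inf_ker {E : Type*} [AddCommGroup E]
    [Module (ZMod 2) E] [FiniteDimensional (ZMod 2) E] (hq : NoSingularLine q)
    (f : E →ₗ[ZMod 2] V) {L : Submodule (ZMod 2) E} (hL : ∀ v ∈ L, q (f v) = 0) :
    finrank (ZMod 2) L ≤ 1 + finrank (ZMod 2) ↥(L ⊓ LinearMap.ker f) := by
  rw [L.finrank_eq_finrank_map_add_finrank_inf_ker f]
  gcongr
  exact hq.finrank_le_one (by rintro _ ⟨v, hv, rfl⟩; exact hL v hv)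

end NoSingularLine

def ellipticForm (x : Fin 4 → ZMod 2) : ZMod 2 := x 0 ^ 2 + x 0 * x 1 + x 1 ^ 2 + x 2 * x 3

def normPlusSquare (x : Fin 3 → ZMod 2) : ZMod 2 := x 0 ^ 2 + x 0 * x 1 + x 1 ^ 2 + x 2 ^ 2

theorem noSingularLine_ellipticForm : NoSingularLine ellipticForm := by
  unfold NoSingularLine; decide

theorem noSingularLine_normPlusSquare : NoSingularLine normPlusSquare := by
  unfold NoSingularLine; decide

def ellipticProj : (Fin 8 → ZMod 2) →ₗ[ZMod 2] (Fin 4 → ZMod 2) where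
  toFun v := ![v 0, v 1, v 4 + v 7, v 5 + v 6]
  map_add' u v := by ext i; fin_cases i <;> simp [add_add_add_comm]
  map_smul' c v := by ext i; fin_cases i <;> simp [mul_add]

def normSquareProj : (Fin 8 → ZMod 2) →ₗ[ZMod 2] (Fin 3 → ZMod 2) where
  toFun v := ![v 2, v 3, v 4 + v 6]
  map_add' u v := by ext i; fin_cases i <;> simp [add_add_add_comm]
  map_smul' c v := by ext i; fin_cases i <;> simp [mul_add]

theorem normPlusSquare_normSquareProj {v : Fin 8 → ZMod 2} (hv : ellipticProj v = 0) :
    normPlusSquare (normSquareProj v) = v 0 ^ 2 + v 1 ^ 2 + v 2 ^ 2 + v 2 * v 3 + v 3 ^ 2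
        + v 4 * v 6 + v 5 * v 7 + v 6 ^ 2 + v 7 ^ 2 := by
  have h0 : v 0 = 0 := congrFun hv 0
  have h1 : v 1 = 0 := congrFun hv 1
  have h47 : v 4 + v 7 = 0 := congrFun hv 2
  have h56 : v 5 + v 6 = 0 := congrFun hv 3
  show v 2 ^ 2 + v 2 * v 3 + v 3 ^ 2 + (v 4 + v 6) ^ 2 = _
  linear_combination (v 4 - v 7 + v 6) * h47 - v 7 * h56 - v 0 * h0 - v 1 * h1

theorem finrank_ker_ellipticProj_inf_ker_normSquareProj_le_one :
    finrank (ZMod 2) ↥(LinearMap.ker ellipticProj ⊓ LinearMap.ker normSquareProj) ≤ 1 := by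
  let c : Fin 8 → ZMod 2 := ![0, 0, 0, 0, 1, 1, -1, -1]
  have hle : LinearMap.ker ellipticProj ⊓ LinearMap.ker normSquareProj ≤
      Submodule.span (ZMod 2) {c} := by
    rintro v ⟨hπ, hρ⟩
    have h0 : v 0 = 0 := congrFun hπ 0
    have h1 : v 1 = 0 := congrFun hπ 1
    have h47 : v 4 + v 7 = 0 := congrFun hπ 2
    have h56 : v 5 + v 6 = 0 := congrFun hπ 3
    have h2 : v 2 = 0 := congrFun hρ 0
    have h3 : v 3 = 0 := congrFun hρ 1
    have h46 : v 4 + v 6 = 0 := congrFun hρ 2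
    refine Submodule.mem_span_singleton.mpr ⟨v 4, funext fun i => ?_⟩
    fin_cases i <;> simp [c] <;> grind
  exact (Submodule.finrank_mono hle).trans (finrank_span_le_card {c})

/-- Over `𝔽₂`, the forms `Q1 + Q3` and `Q2 + Q3` do not simultaneously
vanish on any 4-dimensional linear subspace of `𝔽₂⁸`. -/
theorem stmt5 (L : Submodule (ZMod 2) (Fin 8 → ZMod 2))
    (hL : Module.finrank (ZMod 2) L = 4) :
    ¬ (∀ v : Fin 8 → ZMod 2, v ∈ L →
      v 0 ^ 2 + v 1 ^ 2 + v 2 ^ 2 + v 2 * v 3 + v 3 ^ 2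
        + v 4 * v 6 + v 5 * v 7 + v 6 ^ 2 + v 7 ^ 2 = 0 ∧
      v 0 ^ 2 + v 0 * v 1 + v 1 ^ 2 + (v 4 + v 7) * (v 5 + v 6) = 0) := by
  intro hvan
  have hπ : ∀ v ∈ L, ellipticForm (ellipticProj v) = 0 := fun v hv => (hvan v hv).2
  have hρ : ∀ v ∈ L ⊓ LinearMap.ker ellipticProj, normPlusSquare (normSquareProj v) = 0 :=
    fun v hv => (normPlusSquare_normSquareProj hv.2).trans (hvan v hv.1).1
  have h₁ := noSingularLine_ellipticForm.finrank_le_one_add_finrank_inf_ker ellipticProj hπ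
  have h₂ := noSingularLine_normPlusSquare.finrank_le_one_add_finrank_inf_ker normSquareProj hρ
  have h₃ : finrank (ZMod 2) ↥(L ⊓ LinearMap.ker ellipticProj ⊓ LinearMap.ker normSquareProj)
      ≤ 1 :=
    (Submodule.finrank_mono (inf_le_inf_right _ inf_le_right)).trans
      finrank_ker_ellipticProj_inf_ker_normSquareProj_le_one
  omega
end

section
/- Over F_2, the quadratic form Q = x3^2 + x3*x4 + x4^2 + x5*x6 + x5*x7 + x5^2 + x7^2 in five variables (x3,x4,x5,x6,x7) does not vanish identically on any 3-dimensional linear subspace of F_2^5. -/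
private def P7 (v : Fin 5 → ZMod 2) : Prop :=
  v 0 ^ 2 + v 0 * v 1 + v 1 ^ 2 + v 2 * v 3 + v 2 * v 4 + v 2 ^ 2 + v 4 ^ 2 = 0

private instance : DecidablePred P7 := fun v => by unfold P7; infer_instance

set_option maxRecDepth 10000 in
private lemma key7 : ∀ a b c : Fin 5 → ZMod 2,
    P7 a → P7 b → P7 c → P7 (a + b) → P7 (a + c) → P7 (b + c) → P7 (a + b + c) →
    a = 0 ∨ b = 0 ∨ c = 0 ∨ a + b = 0 ∨ a + c = 0 ∨ b + c = 0 ∨ a + b + c = 0 := by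
  decide

/-- Over `𝔽₂`, the form
`Q = x₃² + x₃x₄ + x₄² + x₅x₆ + x₅x₇ + x₅² + x₇²` in the five variables
`(x₃,x₄,x₅,x₆,x₇)` (coordinates `v 0,…,v 4`) does not vanish identically on any
3-dimensional linear subspace of `𝔽₂⁵`. -/
theorem stmt7 (W : Submodule (ZMod 2) (Fin 5 → ZMod 2))
    (hW : Module.finrank (ZMod 2) W = 3) :
    ¬ (∀ v : Fin 5 → ZMod 2, v ∈ W →
      v 0 ^ 2 + v 0 * v 1 + v 1 ^ 2 + v 2 * v 3 + v 2 * v 4 + v 2 ^ 2 + v 4 ^ 2 = 0) := by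
  intro h
  have : FiniteDimensional (ZMod 2) W := .of_finrank_pos (by omega)
  let B := Module.finBasisOfFinrankEq (ZMod 2) W hW
  set a : Fin 5 → ZMod 2 := (B 0 : Fin 5 → ZMod 2) with ha
  set b : Fin 5 → ZMod 2 := (B 1 : Fin 5 → ZMod 2) with hb
  set c : Fin 5 → ZMod 2 := (B 2 : Fin 5 → ZMod 2) with hc
  have hmem : ∀ i : Fin 3, (B i : Fin 5 → ZMod 2) ∈ W := fun i => (B i).2
  have hQ : ∀ v ∈ W, P7 v := h
  have hli : LinearIndependent (ZMod 2) (fun i : Fin 3 => (B i : Fin 5 → ZMod 2)) :=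
    B.linearIndependent.map' W.subtype W.ker_subtype
  have hne : ∀ g : Fin 3 → ZMod 2, g ≠ 0 → ∑ i, g i • (B i : Fin 5 → ZMod 2) ≠ 0 := by
    intro g hg hsum
    exact hg (funext (Fintype.linearIndependent_iff.mp hli g hsum))
  have key := key7 a b c (hQ a (hmem 0)) (hQ b (hmem 1)) (hQ c (hmem 2))
    (hQ _ (W.add_mem (hmem 0) (hmem 1))) (hQ _ (W.add_mem (hmem 0) (hmem 2)))
    (hQ _ (W.add_mem (hmem 1) (hmem 2)))
    (hQ _ (W.add_mem (W.add_mem (hmem 0) (hmem 1)) (hmem 2)))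
  have e : ∀ (g : Fin 3 → ZMod 2), ∑ i, g i • (B i : Fin 5 → ZMod 2) =
      g 0 • a + g 1 • b + g 2 • c := by
    intro g
    simp [Fin.sum_univ_three, ha, hb, hc, add_assoc]
  rcases key with h0 | h0 | h0 | h0 | h0 | h0 | h0
  · exact hne ![1,0,0] (by decide) (by rw [e]; simpa using h0)
  · exact hne ![0,1,0] (by decide) (by rw [e]; simpa using h0)
  · exact hne ![0,0,1] (by decide) (by rw [e]; simpa using h0)
  · exact hne ![1,1,0] (by decide) (by rw [e]; simpa using h0)
  · exact hne ![1,0,1] (by decide) (by rw [e]; simpa [add_assoc] using h0)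
  · exact hne ![0,1,1] (by decide) (by rw [e]; simpa using h0)
  · exact hne ![1,1,1] (by decide) (by rw [e]; simpa [add_assoc] using h0)
end

section
/- Let K be a field, r a positive integer, and suppose that every system of k quadratic forms over K in more than β_k variables has a nontrivial common zero, and that for every system of r-k quadratic forms in n variables over K with n > N there exists a K-linear subspace of dimension β_k + 1 on which all r-k forms vanish identically. Then every system of r quadratic forms over K in more than N variables has a nontrivial common zero. -/
/-- Leep's induction `β(r;K) ≤ β(r-k; K, β(k;K))`: if any `k` quadratic
forms over `K` in more than `βk` variables have a nontrivial common zero, and any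
`r - k` quadratic forms in `n > N` variables vanish identically on some subspace of
dimension `βk + 1`, then any `r` quadratic forms over `K` in more than `N` variables
have a nontrivial common zero. -/
theorem stmt8 (K : Type*) [Field K] (r k βk N : ℕ) (hk : 0 < k) (hkr : k < r)
    (H1 : ∀ (n : ℕ) (Q : Fin k → QuadraticForm K (Fin n → K)), n > βk →
      ∃ v : Fin n → K, v ≠ 0 ∧ ∀ i, Q i v = 0)
    (H2 : ∀ (n : ℕ) (Q : Fin (r - k) → QuadraticForm K (Fin n → K)), n > N →
      ∃ W : Submodule K (Fin n → K), Module.finrank K W = βk + 1 ∧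
        ∀ i, ∀ v ∈ W, Q i v = 0) :
    ∀ (n : ℕ) (Q : Fin r → QuadraticForm K (Fin n → K)), n > N →
      ∃ v : Fin n → K, v ≠ 0 ∧ ∀ i, Q i v = 0 := by
  intro n Q hn
  obtain ⟨W, hWrank, hWzero⟩ := H2 n (fun j => Q ⟨k + j, by omega⟩) hn
  haveI : FiniteDimensional K W := FiniteDimensional.finiteDimensional_submodule W
  let e : W ≃ₗ[K] (Fin (βk + 1) → K) :=
    (Module.finBasisOfFinrankEq K W hWrank).equivFun
  let f : (Fin (βk + 1) → K) →ₗ[K] (Fin n → K) := W.subtype ∘ₗ (e.symm : (Fin (βk + 1) → K) →ₗ[K] W)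
  obtain ⟨x, hx, hQx⟩ := H1 (βk + 1)
    (fun i => (Q (Fin.castLE hkr.le i)).comp f) (Nat.lt_succ_self βk)
  refine ⟨f x, ?_, ?_⟩
  · intro h
    apply hx
    have : e.symm x = 0 := Subtype.ext h
    rw [← e.apply_symm_apply x, this, e.map_zero]
  · intro i
    by_cases hik : (i : ℕ) < k
    · have := hQx ⟨i, hik⟩
      simpa [QuadraticMap.comp_apply, Fin.ext_iff] using this
    · have hjk : (i : ℕ) - k < r - k := by omega
      have := hWzero ⟨(i : ℕ) - k, hjk⟩ (f x) (e.symm x).2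
      have hidx : (⟨k + ((i : ℕ) - k), by omega⟩ : Fin r) = i := by
        ext; simp; omega
      rwa [hidx] at this
end

section
/- Let K be a field and q1,...,qr quadratic forms in n variables over K. Suppose every system of r quadratic forms over K in more than B variables has a nontrivial common zero, and suppose n > (r+1)*m + B. If W is a linear subspace of K^n of dimension m on which all qi vanish identically, then there exists a linear subspace W' of dimension m+1 containing W on which all qi vanish identically. -/
/-!
Let `V₀` be the common polar orthogonal of `W` with respect to all the `qᵢ`; it is cut out by
`r · m` linear conditions, so it has dimension at least `n - r m`. A complement `U` of `V₀ ∩ W`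
inside `V₀` therefore has dimension at least `n - (r + 1) m > B`, so the `qᵢ` restricted to `U`
have a nontrivial common zero `u`. As `u` lies outside `W`, is isotropic for every `qᵢ` and is
polar-orthogonal to `W`, every `qᵢ` vanishes on the `(m + 1)`-dimensional space `W + K u`.
-/

open Module LinearMap

namespace Submodule

variable {K V : Type*} [DivisionRing K] [AddCommGroup V] [Module K V] [FiniteDimensional K V]

theorem finrank_le_finrank_iInf_add_sum_finrank_quotient {ι : Type*} [Fintype ι]
    (S : ι → Submodule K V) :
    finrank K V ≤ finrank K (⨅ i, S i : Submodule K V) + ∑ i, finrank K (V ⧸ S i) := by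
  set L : V →ₗ[K] ((i : ι) → V ⧸ S i) := LinearMap.pi fun i => (S i).mkQ
  have hker : LinearMap.ker L = ⨅ i, S i := by
    simp only [L, LinearMap.ker_pi, ker_mkQ]
  have hrange : finrank K (LinearMap.range L) ≤ ∑ i, finrank K (V ⧸ S i) :=
    (Module.finrank_pi_fintype K (M := fun i => V ⧸ S i)) ▸ (LinearMap.range L).finrank_le
  have := L.finrank_range_add_finrank_ker
  rw [hker] at this
  omega

theorem exists_le_disjoint_finrank_le_add (S T : Submodule K V) :
    ∃ U ≤ S, Disjoint U T ∧ finrank K S ≤ finrank K U + finrank K T := by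
  obtain ⟨C, hC⟩ := exists_isCompl (S ⊓ T)
  refine ⟨C ⊓ S, inf_le_right, ?_, ?_⟩
  · rw [disjoint_iff, ← le_bot_iff, ← hC.disjoint.eq_bot]
    exact fun x ⟨⟨hxC, hxS⟩, hxT⟩ => ⟨⟨hxS, hxT⟩, hxC⟩
  · have hS : S = S ⊓ T ⊔ C ⊓ S := by
      rw [← sup_inf_assoc_of_le C inf_le_left, hC.codisjoint.eq_top, top_inf_eq]
    calc finrank K S = finrank K (S ⊓ T ⊔ C ⊓ S : Submodule K V) := by rw [← hS]
      _ ≤ finrank K (S ⊓ T : Submodule K V) + finrank K (C ⊓ S : Submodule K V) :=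
        finrank_add_le_finrank_add_finrank _ _
      _ ≤ finrank K (C ⊓ S : Submodule K V) + finrank K T := by
        rw [add_comm]; gcongr; exact finrank_mono inf_le_right

end Submodule

theorem LinearMap.BilinForm.finrank_quotient_orthogonal_le {K V : Type*} [Field K]
    [AddCommGroup V] [Module K V] [FiniteDimensional K V] (B : LinearMap.BilinForm K V)
    (W : Submodule K V) : finrank K (V ⧸ B.orthogonal W) ≤ finrank K W := by
  have := B.finrank_add_finrank_orthogonal' W
  have := (B.orthogonal W).finrank_quotient_add_finrank
  omega

theorem QuadraticForm.finrank_le_finrank_iInf_orthogonal_add {K V ι : Type*} [Field K]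
    [AddCommGroup V] [Module K V] [FiniteDimensional K V] [Fintype ι]
    (q : ι → QuadraticForm K V) (W : Submodule K V) :
    finrank K V ≤ finrank K (⨅ i, BilinForm.orthogonal (q i).polarBilin W :
      Submodule K V) + Fintype.card ι * finrank K W := by
  have hsum := Finset.sum_le_card_nsmul Finset.univ _ (finrank K W)
    fun i _ => BilinForm.finrank_quotient_orthogonal_le (q i).polarBilin W
  have := Submodule.finrank_le_finrank_iInf_add_sum_finrank_quotient
    fun i => BilinForm.orthogonal (q i).polarBilin W
  rw [Finset.card_univ, smul_eq_mul] at hsum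
  omega

theorem QuadraticMap.eq_zero_of_mem_sup_span_singleton {R M N : Type*} [CommRing R]
    [AddCommGroup M] [Module R M] [AddCommGroup N] [Module R N] (Q : QuadraticMap R M N)
    {W : Submodule R M} {u : M} (hW : ∀ w ∈ W, Q w = 0) (hu : Q u = 0)
    (hWu : ∀ w ∈ W, QuadraticMap.polar Q w u = 0) : ∀ v ∈ W ⊔ R ∙ u, Q v = 0 := by
  intro v hv
  obtain ⟨w, hw, z, hz, rfl⟩ := Submodule.mem_sup.mp hv
  obtain ⟨c, rfl⟩ := Submodule.mem_span_singleton.mp hz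
  have hsplit : Q (w + c • u) = QuadraticMap.polar Q w (c • u) + Q w + Q (c • u) := by
    rw [QuadraticMap.polar]; abel
  rw [hsplit, QuadraticMap.polar_smul_right, hWu w hw, QuadraticMap.map_smul, hu, hW w hw]
  simp

theorem QuadraticForm.exists_ne_zero_mem_forall_eq_zero {K V ι : Type*} [Field K]
    [AddCommGroup V] [Module K V] (q : ι → QuadraticForm K V) {B : ℕ}
    (hB : ∀ (n' : ℕ) (Q : ι → QuadraticForm K (Fin n' → K)), n' > B →
      ∃ v : Fin n' → K, v ≠ 0 ∧ ∀ i, Q i v = 0)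
    (U : Submodule K V) [FiniteDimensional K U] (hU : B < finrank K U) :
    ∃ u ∈ U, u ≠ 0 ∧ ∀ i, q i u = 0 := by
  let e : (Fin (finrank K U) → K) ≃ₗ[K] U := (Module.finBasis K U).equivFun.symm
  obtain ⟨v, hv0, hv⟩ := hB _ (fun i => (q i).comp (U.subtype ∘ₗ e.toLinearMap)) hU
  refine ⟨e v, (e v).2, ?_, hv⟩
  simpa [Submodule.coe_eq_zero] using hv0

/-- The inductive step for `β(r;K,m) ≤ (r+1)m + β(r;K)`: if every system
of `r` quadratic forms over `K` in more than `B` variables has a nontrivial common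
zero, `n > (r+1)m + B`, and all the `qᵢ` vanish identically on an `m`-dimensional
subspace `W` of `Kⁿ`, then they vanish identically on some `(m+1)`-dimensional
subspace containing `W`. -/
theorem stmt9 (K : Type*) [Field K] (r n m B : ℕ)
    (q : Fin r → QuadraticForm K (Fin n → K))
    (hB : ∀ (n' : ℕ) (Q : Fin r → QuadraticForm K (Fin n' → K)), n' > B →
      ∃ v : Fin n' → K, v ≠ 0 ∧ ∀ i, Q i v = 0)
    (hn : n > (r + 1) * m + B)
    (W : Submodule K (Fin n → K)) (hW : Module.finrank K W = m)
    (hvan : ∀ i, ∀ v ∈ W, q i v = 0) :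
    ∃ W' : Submodule K (Fin n → K), Module.finrank K W' = m + 1 ∧ W ≤ W' ∧
      ∀ i, ∀ v ∈ W', q i v = 0 := by
  set V₀ : Submodule K (Fin n → K) := ⨅ i, BilinForm.orthogonal (q i).polarBilin W
  have hV₀ : n ≤ finrank K V₀ + r * m := by
    simpa [hW] using QuadraticForm.finrank_le_finrank_iInf_orthogonal_add q W
  obtain ⟨U, hUV₀, hUW, hU⟩ := Submodule.exists_le_disjoint_finrank_le_add V₀ W
  obtain ⟨u, huU, hu0, hqu⟩ :=
    QuadraticForm.exists_ne_zero_mem_forall_eq_zero q hB U (by rw [add_mul] at hn; omega)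
  have huW : u ∉ W := fun h => hu0 (Submodule.disjoint_def.mp hUW u huU h)
  refine ⟨W ⊔ K ∙ u, by rw [Submodule.finrank_sup_span_singleton huW, hW], le_sup_left,
    fun i => (q i).eq_zero_of_mem_sup_span_singleton (hvan i) (hqu i) fun w hw => ?_⟩
  exact BilinForm.mem_orthogonal_iff.mp ((Submodule.mem_iInf _).mp (hUV₀ huU) i) w hw
end

section
/- Assume that for every prime p, any single quadratic form over Q_p in at least 5 variables has a nontrivial zero, and any pair of quadratic forms over Q_p in at least 9 variables has a nontrivial common zero. Assume further the inductive bounds β(r;Q_p) ≤ β(r-2; Q_p, β(2;Q_p)) and β(r;Q_p,m) ≤ (r+1)m + β(r;Q_p). Then for all r ≥ 1: β(r;Q_p) ≤ 2r^2 if r is even, and β(r;Q_p) ≤ 2r^2 + 2 if r is odd. -/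
/-- Martin's bound: from `β(1) = 4`, `β(2) = 8`, the inductive
inequalities `β(r) ≤ βm(r-2, β(2))` for `r ≥ 3` and `βm(r, m) ≤ (r+1)m + β(r)`, one
deduces `β(r) ≤ 2r²` for even `r ≥ 1` and `β(r) ≤ 2r² + 2` for odd `r ≥ 1`. -/
theorem stmt10 (β : ℕ → ℕ) (βm : ℕ → ℕ → ℕ)
    (h1 : β 1 = 4) (h2 : β 2 = 8)
    (h3 : ∀ r : ℕ, 3 ≤ r → β r ≤ βm (r - 2) (β 2))
    (h4 : ∀ r m : ℕ, βm r m ≤ (r + 1) * m + β r) :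
    ∀ r : ℕ, 1 ≤ r →
      (Even r → β r ≤ 2 * r ^ 2) ∧ (Odd r → β r ≤ 2 * r ^ 2 + 2) := by
  intro r
  induction r using Nat.strong_induction_on with
  | _ r ih =>
    intro hr
    match r, hr with
    | 1, _ => exact ⟨fun h => absurd h (by decide), fun _ => by simp [h1]⟩
    | 2, _ => exact ⟨fun _ => by simp [h2], fun h => absurd h (by decide)⟩
    | (n+3), _ =>
      have key : β (n+3) ≤ (n+2) * 8 + β (n+1) := by
        calc β (n+3) ≤ βm (n+3-2) (β 2) := h3 _ (by omega)
          _ = βm (n+1) 8 := by rw [h2]; congr 1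
          _ ≤ (n+1+1) * 8 + β (n+1) := h4 _ _
          _ = (n+2) * 8 + β (n+1) := by ring_nf
      have hih := ih (n+1) (by omega) (by omega)
      constructor
      · intro he
        have he' : Even (n+1) := by
          rcases he with ⟨k, hk⟩; exact ⟨k-1, by omega⟩
        have := hih.1 he'
        nlinarith
      · intro ho
        have ho' : Odd (n+1) := by
          rcases ho with ⟨k, hk⟩; exact ⟨k-1, by omega⟩
        have := hih.2 ho'
        nlinarith
end

section
/- Let K be a field, q a quadratic form over K in n variables, and suppose there is no K-linear subspace of K^n of dimension m+1 on which q vanishes identically. If q vanishes identically on a subspace W of dimension m, and n > 2m + u where u is such that every quadratic form over K in more than u variables has a nontrivial zero, then there is a contradiction; hence q vanishes identically on some (m+1)-dimensional subspace whenever n > 2m + u. -/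
open Module

/-- the case `r = 1` of `β(1;K,m) ≤ 2m + β(1;K)`: if every quadratic
form over `K` in more than `u` variables has a nontrivial zero and `n > 2m + u`, then
any quadratic form over `K` in `n` variables vanishes identically on some
`(m+1)`-dimensional subspace of `Kⁿ`. -/
theorem stmt19 (K : Type*) [Field K] (u n m : ℕ)
    (hu : ∀ (N : ℕ) (q : QuadraticForm K (Fin N → K)), N > u →
      ∃ v : Fin N → K, v ≠ 0 ∧ q v = 0)
    (hn : n > 2 * m + u)
    (q : QuadraticForm K (Fin n → K)) :
    ∃ W : Submodule K (Fin n → K), Module.finrank K W = m + 1 ∧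
      ∀ v ∈ W, q v = 0 := by
  suffices h : ∀ k : ℕ, 2 * k + u < n + 2 →
      ∃ W : Submodule K (Fin n → K), finrank K W = k ∧ ∀ v ∈ W, q v = 0 by
    exact h (m + 1) (by omega)
  intro k
  induction k with
  | zero =>
    intro _
    refine ⟨⊥, by simp, ?_⟩
    intro v hv
    rw [Submodule.mem_bot] at hv
    simp [hv]
  | succ k ih =>
    intro hk
    obtain ⟨W, hWrank, hWzero⟩ := ih (by omega)
    have hn2 : 2 * k + u < n := by omega
    -- the bilinear polar form
    set B := q.polarBilin with hBdef
    -- the map cutting out the orthogonal of W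
    set φ : (Fin n → K) →ₗ[K] (W →ₗ[K] K) := B.compl₂ W.subtype with hφdef
    set U := LinearMap.ker φ with hUdef
    have hUmem : ∀ v ∈ U, ∀ w ∈ W, QuadraticMap.polar q v w = 0 := by
      intro v hv w hw
      have : φ v = 0 := hv
      have := congrArg (fun f => f ⟨w, hw⟩) this
      simpa [hφdef, hBdef] using this
    -- dimension count for U
    have hrank : finrank K (LinearMap.range φ) + finrank K U = n := by
      have := LinearMap.finrank_range_add_finrank_ker φ
      rwa [finrank_fin_fun] at this
    have hrange : finrank K (LinearMap.range φ) ≤ k := by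
      have h1 : finrank K (LinearMap.range φ) ≤ finrank K (W →ₗ[K] K) :=
        Submodule.finrank_le _
      have h2 : finrank K (W →ₗ[K] K) = k := by
        rw [finrank_linearMap, finrank_self, hWrank, mul_one]
      omega
    have hUrank : n - k ≤ finrank K U := by omega
    -- complement of W ∩ U inside U
    obtain ⟨C', hC'⟩ := Submodule.exists_isCompl (W.comap U.subtype)
    set C := C'.map U.subtype with hCdef
    have hCU : C ≤ U := Submodule.map_subtype_le _ _
    have hCrank : u < finrank K C := by
      have h1 : finrank K (W.comap U.subtype) + finrank K C' = finrank K U :=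
        Submodule.finrank_add_eq_of_isCompl hC'
      have h2 : finrank K C = finrank K C' := Submodule.finrank_map_subtype_eq _ _
      have h3 : finrank K ((W.comap U.subtype).map U.subtype) =
          finrank K (W.comap U.subtype) := Submodule.finrank_map_subtype_eq _ _
      rw [Submodule.map_comap_subtype] at h3
      have h4 : finrank K (U ⊓ W : Submodule K (Fin n → K)) ≤ k := by
        rw [← hWrank]
        exact Submodule.finrank_mono inf_le_right
      omega
    -- restrict q to C and find a nontrivial zero
    set N := finrank K C with hNdef
    set e : (Fin N → K) ≃ₗ[K] C := (Module.finBasis K C).equivFun.symm with hedef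
    set q'' : QuadraticForm K (Fin N → K) := q.comp (C.subtype ∘ₗ e.toLinearMap)
      with hq''def
    obtain ⟨x, hx0, hxq⟩ := hu N q'' (by omega)
    set v : Fin n → K := (e x : Fin n → K) with hvdef
    have hvC : v ∈ C := (e x).2
    have hv0 : v ≠ 0 := by
      intro h
      apply hx0
      have : e x = 0 := Subtype.ext h
      exact e.map_eq_zero_iff.mp this
    have hqv : q v = 0 := by
      simpa [hq''def, QuadraticMap.comp_apply, hvdef] using hxq
    have hvU : v ∈ U := hCU hvC
    have hvW : v ∉ W := by
      intro hvW
      obtain ⟨c', hc'C, hc'v⟩ := hCdef ▸ hvC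
      have hc'W : c' ∈ W.comap U.subtype := by
        simp only [Submodule.mem_comap]
        rw [show U.subtype c' = v from hc'v]
        exact hvW
      have : c' = 0 := by
        have := hC'.inf_eq_bot
        have hmem : c' ∈ W.comap U.subtype ⊓ C' := ⟨hc'W, hc'C⟩
        rw [this, Submodule.mem_bot] at hmem
        exact hmem
      apply hv0
      rw [← hc'v, this]
      simp
    -- the enlarged subspace
    refine ⟨W ⊔ K ∙ v, ?_, ?_⟩
    · have hinf : W ⊓ (K ∙ v) = ⊥ := by
        rw [eq_bot_iff]
        rintro z ⟨hzW, hzv⟩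
        obtain ⟨c, rfl⟩ := Submodule.mem_span_singleton.mp hzv
        rcases eq_or_ne c 0 with rfl | hc
        · simp
        · exact absurd (by simpa [hc] using W.smul_mem c⁻¹ hzW) hvW
      have := Submodule.finrank_sup_add_finrank_inf_eq W (K ∙ v)
      rw [hinf, hWrank, finrank_span_singleton hv0, finrank_bot] at this
      omega
    · intro z hz
      obtain ⟨w, hw, s, hs, rfl⟩ := Submodule.mem_sup.mp hz
      obtain ⟨c, rfl⟩ := Submodule.mem_span_singleton.mp hs
      have hpol : QuadraticMap.polar q w (c • v) = 0 := by
        rw [QuadraticMap.polar_smul_right, QuadraticMap.polar_comm,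
          hUmem v hvU w hw, smul_zero]
      have : q (w + c • v) = q w + q (c • v) + QuadraticMap.polar q w (c • v) := by
        rw [QuadraticMap.polar]; ring
      rw [this, hpol, hWzero w hw, QuadraticMap.map_smul, hqv]
      simp
end
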